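/- The generating function F_1(t,x) = sum over binary trees T of t^{|T|} sum_{v in T} x^{l(v)} satisfies F_1(x) = t F_0^2 + t(x + 1/x) F_0 F_1(x), and hence F_1(x) = B(1+B)/(1 + B(1 - x - 1/x)), where F_0 = 1 + B and B = t(1+B)^2. -/

import Mathlib

/-! Splitting a tree at its root, `node l r`, gives `|T| = |l| + |r| + 1` and
`Σ_v x^ℓ(v) = 1 + x⁻¹ Σ_l + x Σ_r`, so the absolutely convergent sums over trees factor
through pairs of subtrees: `S = Σ_T t^|T|` satisfies `S = 1 + t S²`, and
`F₁ = t S² + t (x + x⁻¹) S F₁`. Truncating by depth, the partial sums obey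
`s_{d+1} = 1 + t s_d² ≤ 2` when `t ≤ 1/4`; this gives convergence and selects the root
`S = 1 + B` of the quadratic, the other root exceeding `1/(2t) > 2`. -/
open Complex

/-- Binary trees: empty, or a root with a left and a right subtree. -/
inductive BinTree where
  | nil : BinTree
  | node : BinTree → BinTree → BinTree

/-- Number of nodes. -/
def BinTree.size : BinTree → ℕ
  | .nil => 0
  | .node l r => l.size + r.size + 1

/-- `∑_{v ∈ T} x^{ℓ(v)}` for the natural labelling of a binary tree. -/
noncomputable def BinTree.labelSum : BinTree → ℂ → ℂ
  | .nil, _ => 0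
  | .node l r, x => 1 + x⁻¹ * l.labelSum x + x * r.labelSum x

/-- The nonempty-binary-tree generating function `B(t) = (1-2t-√(1-4t))/(2t)`. -/
noncomputable def Bfun (t : ℝ) : ℝ := (1 - 2*t - Real.sqrt (1 - 4*t)) / (2*t)

theorem HasSum.mul_of_rclike {𝕜 α β : Type*} [RCLike 𝕜] {f : α → 𝕜} {g : β → 𝕜} {a b : 𝕜}
    (hf : HasSum f a) (hg : HasSum g b) : HasSum (fun p : α × β => f p.1 * g p.2) (a * b) :=
  hf.mul hg <| summable_mul_of_summable_norm (summable_norm_iff.mpr hf.summable)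
    (summable_norm_iff.mpr hg.summable)

namespace BinTree

theorem node_injective : Function.Injective fun p : BinTree × BinTree => node p.1 p.2 := by
  rintro ⟨l, r⟩ ⟨l', r'⟩ h
  cases h
  rfl

def depth : BinTree → ℕ
  | nil => 0
  | node l r => max l.depth r.depth + 1

def upToDepth : ℕ → Finset BinTree
  | 0 => {nil}
  | d + 1 => .cons nil ((upToDepth d ×ˢ upToDepth d).map ⟨_, node_injective⟩) (by simp)

theorem mem_upToDepth : ∀ {T : BinTree} {d : ℕ}, T.depth ≤ d → T ∈ upToDepth d
  | nil, 0, _ | nil, _ + 1, _ => by simp [upToDepth]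
  | node l r, d + 1, h => by
    have h' : max l.depth r.depth ≤ d := by simpa [depth] using h
    simp only [upToDepth, Finset.mem_cons, Finset.mem_map, Finset.mem_product,
      Function.Embedding.coeFn_mk]
    exact .inr ⟨(l, r), ⟨mem_upToDepth (le_of_max_le_left h'),
      mem_upToDepth (le_of_max_le_right h')⟩, rfl⟩

theorem sum_upToDepth_succ {R : Type*} [CommSemiring R] (u : R) (d : ℕ) :
    ∑ T ∈ upToDepth (d + 1), u ^ T.size = 1 + u * (∑ T ∈ upToDepth d, u ^ T.size) ^ 2 := by
  rw [upToDepth, Finset.sum_cons, Finset.sum_map, sq, Finset.sum_mul_sum, ← Finset.sum_product',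
    Finset.mul_sum]
  simp [size, pow_succ, pow_add, mul_comm]

theorem sum_upToDepth_pow_size_le_two {u : ℝ} (hu0 : 0 ≤ u) (hu : u ≤ 1 / 4) (d : ℕ) :
    ∑ T ∈ upToDepth d, u ^ T.size ≤ 2 := by
  induction d with
  | zero => simp [upToDepth, size]
  | succ d ih =>
    have h0 : 0 ≤ ∑ T ∈ upToDepth d, u ^ T.size := Finset.sum_nonneg fun _ _ => by positivity
    rw [sum_upToDepth_succ]
    nlinarith

theorem sum_pow_size_le_two {u : ℝ} (hu0 : 0 ≤ u) (hu : u ≤ 1 / 4) (s : Finset BinTree) :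
    ∑ T ∈ s, u ^ T.size ≤ 2 :=
  calc ∑ T ∈ s, u ^ T.size ≤ ∑ T ∈ upToDepth (s.sup depth), u ^ T.size :=
        Finset.sum_le_sum_of_subset_of_nonneg (fun _ hT => mem_upToDepth (Finset.le_sup hT))
          fun _ _ _ => by positivity
    _ ≤ 2 := sum_upToDepth_pow_size_le_two hu0 hu _

theorem hasSum_of_hasSum_node {M : Type*} [AddCommMonoid M] [TopologicalSpace M]
    [ContinuousAdd M] {f : BinTree → M} {a : M}
    (h : HasSum (fun p : BinTree × BinTree => f (node p.1 p.2)) a) :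
    HasSum f (f nil + a) := by
  have hnodes : HasSum (fun T => match T with | nil => 0 | node l r => f (node l r)) a := by
    refine (node_injective.hasSum_iff ?_).mp h
    rintro (_ | ⟨l, r⟩) hT
    · rfl
    · exact absurd ⟨(l, r), rfl⟩ hT
  have hroot : HasSum (fun T => match T with | nil => f nil | node _ _ => 0) (f nil) :=
    hasSum_single nil fun T hT => by cases T; exacts [absurd rfl hT, rfl]
  exact (hroot.add hnodes).congr_fun fun T => by cases T <;> simp

theorem eq_one_add_mul_sq_of_hasSum_pow_size {𝕜 : Type*} [RCLike 𝕜] {u S : 𝕜}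
    (hS : HasSum (fun T : BinTree => u ^ T.size) S) : S = 1 + u * S ^ 2 := by
  have hnodes : HasSum (fun p : BinTree × BinTree => u ^ (node p.1 p.2).size) (u * S ^ 2) := by
    simpa [size, pow_succ, pow_add, sq, mul_comm, mul_left_comm, mul_assoc]
      using (hS.mul_of_rclike hS).mul_left u
  simpa [size] using hS.unique (hasSum_of_hasSum_node hnodes)

theorem eq_of_hasSum_labelSum {u S x F : ℂ} (hS : HasSum (fun T : BinTree => u ^ T.size) S)
    (hF : HasSum (fun T : BinTree => u ^ T.size * T.labelSum x) F) :
    F = u * S ^ 2 + u * (x + x⁻¹) * S * F := by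
  have hnodes := ((((hS.mul_of_rclike hS).mul_left u).add
      ((hF.mul_of_rclike hS).mul_left (u * x⁻¹))).add
      ((hS.mul_of_rclike hF).mul_left (u * x))).congr_fun
    (g := fun p : BinTree × BinTree => u ^ (node p.1 p.2).size * (node p.1 p.2).labelSum x)
    fun p => by simp only [size, labelSum]; ring
  have hF' := hF.unique (hasSum_of_hasSum_node hnodes)
  simp only [labelSum, mul_zero, zero_add] at hF'
  linear_combination hF'

end BinTree

theorem one_add_Bfun_eq_of_eq {t S : ℝ} (ht0 : 0 < t) (ht : t < 1 / 4) (hS2 : S ≤ 2)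
    (hS : S = 1 + t * S ^ 2) : 1 + Bfun t = S := by
  have hq : Real.sqrt (1 - 4 * t) ^ 2 = 1 - 4 * t := Real.sq_sqrt (by linarith)
  have hq0 := Real.sqrt_nonneg (1 - 4 * t)
  have hroots : (2 * t * S - 1 - Real.sqrt (1 - 4 * t)) *
      (2 * t * S - 1 + Real.sqrt (1 - 4 * t)) = 0 := by
    linear_combination (-4 * t) * hS - hq
  rcases mul_eq_zero.mp hroots with h | h
  · nlinarith [mul_le_mul_of_nonneg_left hS2 ht0.le]
  · rw [Bfun, add_div' _ _ _ (by positivity), div_eq_iff (by positivity)]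
    linarith

theorem Bfun_pos {t : ℝ} (ht0 : 0 < t) (ht : t < 1 / 4) : 0 < Bfun t := by
  have hq : Real.sqrt (1 - 4 * t) ^ 2 = 1 - 4 * t := Real.sq_sqrt (by linarith)
  have hq0 := Real.sqrt_nonneg (1 - 4 * t)
  exact div_pos (by nlinarith) (by positivity)

theorem BinTree.hasSum_pow_size {t : ℝ} (ht0 : 0 < t) (ht : t < 1 / 4) :
    HasSum (fun T : BinTree => t ^ T.size) (1 + Bfun t) := by
  have hsum : Summable fun T : BinTree => t ^ T.size :=
    summable_of_sum_le (fun _ => by positivity) (sum_pow_size_le_two ht0.le ht.le)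
  rw [one_add_Bfun_eq_of_eq ht0 ht (hasSum_le_of_sum_le hsum.hasSum
    (sum_pow_size_le_two ht0.le ht.le)) (eq_one_add_mul_sq_of_hasSum_pow_size hsum.hasSum)]
  exact hsum.hasSum

theorem F1_binary_equation_general (t : ℝ) (ht0 : 0 < t) (ht : t < 1/4)
    (x : ℂ) (F1 : ℂ)
    (hF1 : HasSum (fun T : BinTree => (t : ℂ)^T.size * T.labelSum x) F1) :
    (Bfun t : ℂ) = t * (1 + (Bfun t : ℂ))^2 ∧
    F1 = t * (1 + (Bfun t : ℂ))^2 + t * (x + x⁻¹) * (1 + (Bfun t : ℂ)) * F1 ∧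
    F1 = (Bfun t : ℂ) * (1 + (Bfun t : ℂ)) /
      (1 + (Bfun t : ℂ) * (1 - x - x⁻¹)) := by
  have hS : HasSum (fun T : BinTree => (t : ℂ) ^ T.size) (1 + Bfun t) := by
    exact_mod_cast Complex.hasSum_ofReal.mpr (BinTree.hasSum_pow_size ht0 ht)
  have hB : (Bfun t : ℂ) = t * (1 + Bfun t) ^ 2 := by
    linear_combination BinTree.eq_one_add_mul_sq_of_hasSum_pow_size hS
  have hF := BinTree.eq_of_hasSum_labelSum hS hF1
  refine ⟨hB, hF, ?_⟩
  have hB0 : (Bfun t : ℂ) ≠ 0 := by exact_mod_cast (Bfun_pos ht0 ht).ne'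
  have hB1 : 1 + (Bfun t : ℂ) ≠ 0 := by
    exact_mod_cast (by linarith [Bfun_pos ht0 ht] : 1 + Bfun t ≠ 0)
  have hcleared : F1 * (1 + Bfun t * (1 - x - x⁻¹)) = Bfun t * (1 + Bfun t) := by
    linear_combination (1 + (Bfun t : ℂ)) * hF - ((x + x⁻¹) * F1 + 1 + Bfun t) * hB
  have hden : 1 + (Bfun t : ℂ) * (1 - x - x⁻¹) ≠ 0 := fun h0 =>
    mul_ne_zero hB0 hB1 (by rw [← hcleared, h0, mul_zero])
  rw [eq_div_iff hden, hcleared]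

/-- The one-variable label generating function `F₁(t,x) = ∑_T t^{|T|} ∑_{v∈T} x^{ℓ(v)}`
of binary trees satisfies `F₁ = t F₀² + t(x + 1/x) F₀ F₁`, hence
`F₁ = B(1+B)/(1 + B(1 - x - 1/x))`, where `F₀ = 1 + B` and `B = t(1+B)²`. -/
theorem F1_binary_equation (t : ℝ) (ht0 : 0 < t) (ht : t < 1/4)
    (x : ℂ) (hx : x ≠ 0) (F1 : ℂ)
    (hF1 : HasSum (fun T : BinTree => (t : ℂ)^T.size * T.labelSum x) F1) :
    (Bfun t : ℂ) = t * (1 + (Bfun t : ℂ))^2 ∧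
    F1 = t * (1 + (Bfun t : ℂ))^2 + t * (x + x⁻¹) * (1 + (Bfun t : ℂ)) * F1 ∧
    F1 = (Bfun t : ℂ) * (1 + (Bfun t : ℂ)) /
      (1 + (Bfun t : ℂ) * (1 - x - x⁻¹)) :=
  F1_binary_equation_general t ht0 ht x F1 hF1
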